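/- arXiv:1811.05193 — 2 statements merged into one kernel-verified Lean document; each statement's English description precedes it below -/
import Mathlib

section
/- Rippa's LOOCV identity: let A be the (invertible, symmetric positive definite) kernel interpolation matrix for distinct centers x₁,…,x_N and data vector f, and let α = A⁻¹ f. For each k, let R^{(k)} be the kernel interpolant built on the N−1 points {x_i : i ≠ k} with data {f_i : i ≠ k}. Then the leave-one-out error at x_k satisfies f_k − R^{(k)}(x_k) = α_k / (A⁻¹)_{kk}. -/
/-!
Extend the leave-one-out coefficients `β` by zero at `k` to a vector `v`. Then `A v` agrees with
`f` except at `k`, so `A (α - v)` is `c • eₖ` with `c = f k - R⁽ᵏ⁾(x k)` the leave-one-out error,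
whence `α - v = c • A⁻¹ eₖ` and, reading off the `k`-th entry, `α k = (A⁻¹)ₖₖ c`. Positive
definiteness makes `A` invertible and `(A⁻¹)ₖₖ > 0`.
-/

namespace Matrix

variable {n R : Type*} [DecidableEq n]

def extendByZero [Zero R] (k : n) (β : {i : n // i ≠ k} → R) : n → R :=
  fun i => if h : i = k then 0 else β ⟨i, h⟩

@[simp]
lemma extendByZero_self [Zero R] (k : n) (β : {i : n // i ≠ k} → R) :
    extendByZero k β k = 0 :=
  dif_pos rfl

variable [Fintype n]

lemma mulVec_extendByZero [NonUnitalNonAssocSemiring R] (A : Matrix n n R) (k : n)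
    (β : {i : n // i ≠ k} → R) (i : n) :
    (A *ᵥ extendByZero k β) i = ∑ j : {j : n // j ≠ k}, A i j * β j := by
  rw [mulVec, dotProduct, Fintype.sum_eq_add_sum_subtype_ne _ k, extendByZero_self, mul_zero,
    zero_add]
  refine Fintype.sum_congr _ _ fun j => ?_
  rw [extendByZero, dif_neg j.2]

lemma solution_apply_eq_inv_mul_residual [Field R] {A : Matrix n n R} (hA : IsUnit A.det)
    {α f v : n → R} (hα : A *ᵥ α = f) {k : n} (hvk : v k = 0)
    (hv : ∀ i, i ≠ k → (A *ᵥ v) i = f i) :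
    α k = A⁻¹ k k * (f k - (A *ᵥ v) k) := by
  have hresidual : f - A *ᵥ v = Pi.single k (f k - (A *ᵥ v) k) := by
    ext i
    rcases eq_or_ne i k with rfl | hi
    · simp
    · simp [hv i hi, hi]
  have hdiff : α - v = A⁻¹ *ᵥ Pi.single k (f k - (A *ᵥ v) k) := by
    rw [← hresidual, ← hα, ← mulVec_sub, mulVec_mulVec, nonsing_inv_mul A hA, one_mulVec]
  simpa [hvk, mulVec_single] using congrFun hdiff k

end Matrix

open Matrix

theorem rippa_loocv_identity_general
    {M N : ℕ} (Φ : EuclideanSpace ℝ (Fin M) → EuclideanSpace ℝ (Fin M) → ℝ)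
    (x : Fin N → EuclideanSpace ℝ (Fin M))
    (A : Matrix (Fin N) (Fin N) ℝ)
    (hA : ∀ i k, A i k = Φ (x i) (x k)) (hpd : A.PosDef)
    (f α : Fin N → ℝ) (hα : A.mulVec α = f)
    (k : Fin N) (β : {i : Fin N // i ≠ k} → ℝ)
    (hβ : ∀ i : {i : Fin N // i ≠ k},
      ∑ j : {i : Fin N // i ≠ k}, β j * Φ (x i.1) (x j.1) = f i.1) :
    f k - ∑ j : {i : Fin N // i ≠ k}, β j * Φ (x k) (x j.1)
      = α k / (A⁻¹ k k) := by
  have hAv : ∀ i, (A *ᵥ extendByZero k β) i = ∑ j : {i : Fin N // i ≠ k}, β j * Φ (x i) (x j.1) :=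
    fun i => by simp only [mulVec_extendByZero, hA, mul_comm]
  have hαk := solution_apply_eq_inv_mul_residual hpd.det_pos.ne'.isUnit hα
    (extendByZero_self k β) fun i hi => by rw [hAv, hβ ⟨i, hi⟩]
  rw [hαk, hAv, mul_div_cancel_left₀ _ hpd.inv.diag_pos.ne']

/-- Rippa's LOOCV identity: with A the SPD kernel matrix, α the
full interpolation coefficients, and R^{(k)} the interpolant dropping point k,
the leave-one-out error at x_k is f_k − R^{(k)}(x_k) = α_k / (A⁻¹)_{kk}. -/
theorem rippa_loocv_identity
    {M N : ℕ} (Φ : EuclideanSpace ℝ (Fin M) → EuclideanSpace ℝ (Fin M) → ℝ)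
    (x : Fin N → EuclideanSpace ℝ (Fin M)) (hinj : Function.Injective x)
    (A : Matrix (Fin N) (Fin N) ℝ)
    (hA : ∀ i k, A i k = Φ (x i) (x k)) (hpd : A.PosDef)
    (f α : Fin N → ℝ) (hα : A.mulVec α = f)
    (k : Fin N) (β : {i : Fin N // i ≠ k} → ℝ)
    (hβ : ∀ i : {i : Fin N // i ≠ k},
      ∑ j : {i : Fin N // i ≠ k}, β j * Φ (x i.1) (x j.1) = f i.1) :
    f k - ∑ j : {i : Fin N // i ≠ k}, β j * Φ (x k) (x j.1)
      = α k / (A⁻¹ k k) :=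
  rippa_loocv_identity_general Φ x A hA hpd f α hα k β hβ
end

section
/- The inverse multiquadric φ(r) = (1 + ε²r²)^{−1/2} with ε > 0 defines a strictly positive definite kernel Φ(x,y) = φ(‖x−y‖₂) on ℝ^M for every M ≥ 1. -/
/-!
Since `(1 + s)^(-1/2) = π^(-1/2) ∫ exp (-(1 + s) t²) dt`, the quadratic form of the inverse
multiquadric equals `π^(-1/2) ∫ exp (-t²) G(ε² t²) dt`, where `G(a) = ∑ cᵢ cₖ exp (-a ‖xᵢ - xₖ‖²)`
is the quadratic form of a Gaussian kernel. `G(a) ≥ 0` because `exp (-‖v‖² / 2)` is the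
characteristic function of the standard Gaussian, and for any characteristic function `φ`,
`∑ cᵢ c̄ₖ φ(xᵢ - xₖ) = ∫ |∑ cᵢ exp (i⟪y, xᵢ⟫)|²`. For distinct points `G(a) → ∑ cᵢ² > 0` as
`a → ∞`, so the continuous nonnegative integrand is positive somewhere and the integral is positive.
-/

open MeasureTheory ProbabilityTheory Filter Topology Complex BoundedContinuousFunction
open scoped Real RealInnerProductSpace ComplexConjugate ComplexOrder

theorem exp_inner_sub_mul_I {E : Type*} [NormedAddCommGroup E] [InnerProductSpace ℝ E]
    (y a b : E) : exp (⟪y, a - b⟫ * I) = exp (⟪y, a⟫ * I) * conj (exp (⟪y, b⟫ * I)) := by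
  rw [← exp_conj, ← exp_add, map_mul, conj_ofReal, conj_I, inner_sub_right, ofReal_sub]
  ring_nf

section CharFun

variable {E ι : Type*} [Fintype ι] [NormedAddCommGroup E] [InnerProductSpace ℝ E]
  [MeasurableSpace E] [OpensMeasurableSpace E] (μ : Measure E) [IsFiniteMeasure μ]
  (x : ι → E) (c : ι → ℂ)

theorem sum_mul_conj_mul_charFun_eq_integral :
    ∑ i, ∑ k, c i * conj (c k) * charFun μ (x i - x k)
      = ∫ y, ((‖∑ i, c i * exp (⟪y, x i⟫ * I)‖ ^ 2 : ℝ) : ℂ) ∂μ := by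
  have hint : ∀ i k, Integrable (fun y ↦ c i * conj (c k) * exp (⟪y, x i - x k⟫ * I)) μ :=
    fun i k ↦ ((innerProbChar (x i - x k)).integrable μ).const_mul _
  have hsq : ∀ y, ((‖∑ i, c i * exp (⟪y, x i⟫ * I)‖ ^ 2 : ℝ) : ℂ)
      = ∑ i, ∑ k, c i * conj (c k) * exp (⟪y, x i - x k⟫ * I) := by
    intro y
    rw [← normSq_eq_norm_sq, ← mul_conj, map_sum, Finset.sum_mul_sum]
    simp_rw [exp_inner_sub_mul_I, map_mul]
    exact Finset.sum_congr rfl fun i _ ↦ Finset.sum_congr rfl fun k _ ↦ by ring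
  simp_rw [hsq]
  rw [integral_finsetSum _ fun i _ ↦ integrable_finsetSum _ fun k _ ↦ hint i k]
  refine Finset.sum_congr rfl fun i _ ↦ ?_
  rw [integral_finsetSum _ fun k _ ↦ hint i k]
  refine Finset.sum_congr rfl fun k _ ↦ ?_
  rw [charFun_apply, integral_const_mul]

theorem sum_mul_conj_mul_charFun_nonneg :
    0 ≤ ∑ i, ∑ k, c i * conj (c k) * charFun μ (x i - x k) := by
  rw [sum_mul_conj_mul_charFun_eq_integral, integral_complex_ofReal]
  exact zero_le_real.mpr (integral_nonneg fun y ↦ sq_nonneg _)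

end CharFun

noncomputable def gaussianQuadraticForm {E ι : Type*} [Fintype ι] [NormedAddCommGroup E]
    (x : ι → E) (c : ι → ℝ) (a : ℝ) : ℝ :=
  ∑ i, ∑ k, c i * c k * Real.exp (-(a * ‖x i - x k‖ ^ 2))

section GaussianQuadraticForm

variable {E ι : Type*} [Fintype ι] [NormedAddCommGroup E] (x : ι → E) (c : ι → ℝ)

@[fun_prop]
theorem continuous_gaussianQuadraticForm : Continuous fun a ↦ gaussianQuadraticForm x c a := by
  unfold gaussianQuadraticForm
  fun_prop

theorem gaussianQuadraticForm_nonneg [InnerProductSpace ℝ E] [FiniteDimensional ℝ E]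
    {a : ℝ} (ha : 0 ≤ a) : 0 ≤ gaussianQuadraticForm x c a := by
  borelize E
  have hchar : ∀ i k, (Real.exp (-(a * ‖x i - x k‖ ^ 2)) : ℂ)
      = charFun (stdGaussian E) (√(2 * a) • x i - √(2 * a) • x k) := by
    intro i k
    rw [charFun_stdGaussian, ← smul_sub, norm_smul, Real.norm_of_nonneg (Real.sqrt_nonneg _),
      ← ofReal_pow, mul_pow, Real.sq_sqrt (by positivity), ofReal_exp]
    push_cast
    ring_nf
  have h := sum_mul_conj_mul_charFun_nonneg (stdGaussian E) (fun i ↦ √(2 * a) • x i)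
    (fun i ↦ (c i : ℂ))
  simp_rw [conj_ofReal, ← hchar] at h
  unfold gaussianQuadraticForm
  exact_mod_cast h

theorem tendsto_gaussianQuadraticForm_atTop (hx : Function.Injective x) :
    Tendsto (gaussianQuadraticForm x c) atTop (𝓝 (∑ i, c i ^ 2)) := by
  classical
  have hterm : ∀ i k, Tendsto (fun a ↦ c i * c k * Real.exp (-(a * ‖x i - x k‖ ^ 2))) atTop
      (𝓝 (if i = k then c i * c k else 0)) := by
    intro i k
    split_ifs with hik
    · subst hik
      simp
    · have hd : 0 < ‖x i - x k‖ ^ 2 := by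
        have := sub_ne_zero.mpr (hx.ne hik)
        positivity
      have hexp := Real.tendsto_exp_atBot.comp
        (tendsto_neg_atTop_atBot.comp (tendsto_id.atTop_mul_const hd))
      simpa using hexp.const_mul (c i * c k)
  have hdiag : ∑ i, c i ^ 2 = ∑ i, ∑ k, if i = k then c i * c k else 0 := by
    simp [sq]
  rw [hdiag]
  exact tendsto_finsetSum _ fun i _ ↦ tendsto_finsetSum _ fun k _ ↦ hterm i k

theorem exp_neg_sq_mul_gaussianQuadraticForm (ε t : ℝ) :
    Real.exp (-t ^ 2) * gaussianQuadraticForm x c (ε ^ 2 * t ^ 2)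
      = ∑ i, ∑ k, c i * c k * Real.exp (-(1 + ε ^ 2 * ‖x i - x k‖ ^ 2) * t ^ 2) := by
  simp_rw [gaussianQuadraticForm, Finset.mul_sum]
  refine Finset.sum_congr rfl fun i _ ↦ Finset.sum_congr rfl fun k _ ↦ ?_
  rw [mul_left_comm, ← Real.exp_add]
  ring_nf

theorem integrable_exp_neg_sq_mul_gaussianQuadraticForm (ε : ℝ) :
    Integrable fun t ↦ Real.exp (-t ^ 2) * gaussianQuadraticForm x c (ε ^ 2 * t ^ 2) := by
  simp_rw [exp_neg_sq_mul_gaussianQuadraticForm]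
  exact integrable_finsetSum _ fun i _ ↦ integrable_finsetSum _ fun k _ ↦
    (integrable_exp_neg_mul_sq (by positivity)).const_mul _

end GaussianQuadraticForm

theorem rpow_neg_half_eq_integral_exp {b : ℝ} (hb : 0 < b) :
    b ^ (-(1 / 2 : ℝ)) = (√π)⁻¹ * ∫ t, Real.exp (-b * t ^ 2) := by
  rw [integral_gaussian, Real.sqrt_div Real.pi_pos.le, Real.rpow_neg hb.le, ← Real.sqrt_eq_rpow]
  have := Real.sqrt_pos.mpr Real.pi_pos
  field_simp

theorem sum_inverseMultiquadric_eq_integral {E ι : Type*} [Fintype ι] [NormedAddCommGroup E]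
    (x : ι → E) (c : ι → ℝ) (ε : ℝ) :
    ∑ i, ∑ k, c i * c k * (1 + ε ^ 2 * ‖x i - x k‖ ^ 2) ^ (-(1 / 2 : ℝ))
      = (√π)⁻¹ * ∫ t, Real.exp (-t ^ 2) * gaussianQuadraticForm x c (ε ^ 2 * t ^ 2) := by
  simp_rw [exp_neg_sq_mul_gaussianQuadraticForm]
  rw [integral_finsetSum _ fun i _ ↦ integrable_finsetSum _ fun k _ ↦
    (integrable_exp_neg_mul_sq (by positivity)).const_mul _, Finset.mul_sum]
  refine Finset.sum_congr rfl fun i _ ↦ ?_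
  rw [integral_finsetSum _ fun k _ ↦ (integrable_exp_neg_mul_sq (by positivity)).const_mul _,
    Finset.mul_sum]
  refine Finset.sum_congr rfl fun k _ ↦ ?_
  rw [integral_const_mul, rpow_neg_half_eq_integral_exp (by positivity)]
  ring

theorem inverse_multiquadric_strictly_posDef_general
    {M : ℕ} (ε : ℝ) (hε : 0 < ε) :
    ∀ (N : ℕ) (x : Fin N → EuclideanSpace ℝ (Fin M)),
      Function.Injective x → ∀ c : Fin N → ℝ, c ≠ 0 →
      0 < ∑ i, ∑ k, c i * c k *
        (1 + ε ^ 2 * ‖x i - x k‖ ^ 2) ^ (-(1 / 2 : ℝ)) := by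
  intro N x hx c hc
  have hdiag : 0 < ∑ i, c i ^ 2 := by
    obtain ⟨i, hi⟩ := Function.ne_iff.mp hc
    exact Finset.sum_pos' (fun i _ ↦ sq_nonneg _) ⟨i, Finset.mem_univ _, sq_pos_of_ne_zero hi⟩
  have hscale : Tendsto (fun t : ℝ ↦ ε ^ 2 * t ^ 2) atTop atTop :=
    (tendsto_pow_atTop two_ne_zero).const_mul_atTop (by positivity)
  obtain ⟨t₀, ht₀⟩ := (((tendsto_gaussianQuadraticForm_atTop x c hx).comp hscale).eventually
    (eventually_gt_nhds hdiag)).exists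
  rw [sum_inverseMultiquadric_eq_integral]
  refine mul_pos (by positivity) (integral_pos_of_integrable_nonneg_nonzero (x := t₀) (by fun_prop)
    (integrable_exp_neg_sq_mul_gaussianQuadraticForm x c ε)
    (fun t ↦ mul_nonneg (Real.exp_pos _).le (gaussianQuadraticForm_nonneg x c (by positivity)))
    (mul_pos (Real.exp_pos _) ht₀).ne')

/-- the inverse multiquadric φ(r) = (1+ε²r²)^{−1/2}, ε > 0,
defines a strictly positive definite kernel Φ(x,y) = φ(‖x−y‖) on ℝ^M for
every M ≥ 1. -/
theorem inverse_multiquadric_strictly_posDef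
    {M : ℕ} (hM : 1 ≤ M) (ε : ℝ) (hε : 0 < ε) :
    ∀ (N : ℕ) (x : Fin N → EuclideanSpace ℝ (Fin M)),
      Function.Injective x → ∀ c : Fin N → ℝ, c ≠ 0 →
      0 < ∑ i, ∑ k, c i * c k *
        (1 + ε ^ 2 * ‖x i - x k‖ ^ 2) ^ (-(1 / 2 : ℝ)) :=
  inverse_multiquadric_strictly_posDef_general ε hε
end
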